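/- arXiv:1608.00657 — 2 statements merged into one kernel-verified Lean document; each statement's English description precedes it below -/
import Mathlib

section
/- For a given transition s →_w s', removing a 0-cycle from a matching transition sequence does not increase the value considered in the distance computation: if a sequence t →_{v₁} t₁ ⋯ →_{v_n} t_n contains a cycle whose transition weights sum to 0, then the sequence obtained by deleting that cycle has the same accumulated weight Σvᵢ, ends in the same state, and its set of intermediate states is a subset of the intermediate states of the original sequence. -/
open scoped NNReal ENNReal

/-- A weighted Kripke structure over state space `S` and atomic propositions `AP`:
a labelling function and a transition relation with nonnegative rational weights. -/
structure WKS (S : Type) (AP : Type) where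
  trans : S → ℚ≥0 → S → Prop
  label : S → Set AP

namespace WKS

open Classical

variable {S AP : Type} (K : WKS S AP)

/-- `K.path t l` holds if `l` is a transition sequence (list of weight/state pairs)
starting in `t`. -/
def path : S → List (ℚ≥0 × S) → Prop
  | _, [] => True
  | s, (w, s') :: l => K.trans s w s' ∧ path s' l

/-- Accumulated weight of a transition sequence (the empty sequence has weight 0). -/
def acc (l : List (ℚ≥0 × S)) : ℚ≥0 := (l.map Prod.fst).sum

/-- The end state of a transition sequence starting in `t`. -/
def endSt (t : S) (l : List (ℚ≥0 × S)) : S := (l.map Prod.snd).getLastD t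

/-- The intermediate states of a transition sequence (all visited states except
the start state and the end state). -/
def inter (l : List (ℚ≥0 × S)) : List S := (l.map Prod.snd).dropLast

/-- Relative deviation `|v/w - 1|` as an extended nonnegative real. -/
noncomputable def rel (w v : ℚ≥0) : ℝ≥0∞ := ENNReal.ofReal |(v : ℝ) / (w : ℝ) - 1|

/-- The distance refinement operator `F`. -/
noncomputable def F (d : S → S → ℝ≥0∞) : S → S → ℝ≥0∞ := fun s t =>
  if K.label s ≠ K.label t then ⊤
  else
    ⨆ w : ℚ≥0, ⨆ s' : S, ⨆ _ : K.trans s w s',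
      ⨅ l : {l : List (ℚ≥0 × S) // K.path t l},
        max (rel w (acc l.1))
          (max (d s' (endSt t l.1)) (⨆ u ∈ inter l.1, d s u))

/-- The weighted branching simulation distance: the least pre-fixed point of `F`. -/
noncomputable def wdist : S → S → ℝ≥0∞ := fun s t =>
  ⨅ d ∈ {d : S → S → ℝ≥0∞ | F K d ≤ d}, d s t

/-- Weighted branching ε-simulation relations. -/
def IsEpsSim (ε : ℝ≥0) (R : S → S → Prop) : Prop :=
  ∀ s t, R s t →
    K.label s = K.label t ∧
      ∀ w s', K.trans s w s' →
        ∃ l, K.path t l ∧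
          (w : ℝ) * (1 - ε) ≤ ((acc l : ℚ≥0) : ℝ) ∧
          ((acc l : ℚ≥0) : ℝ) ≤ (w : ℝ) * (1 + ε) ∧
          R s' (endSt t l) ∧ ∀ u ∈ inter l, R s u

end WKS

namespace List

variable {α : Type*}

theorem dropLast_sublist_dropLast_append (a c : List α) : a.dropLast <+ (a ++ c).dropLast := by
  rw [dropLast_append]
  split
  · rfl
  · exact (dropLast_sublist a).trans (sublist_append_left _ _)

theorem dropLast_append_sublist_dropLast_append_append (a b c : List α) :
    (a ++ b).dropLast <+ (a ++ c ++ b).dropLast := by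
  by_cases hb : b = []
  · subst hb
    simpa only [append_nil] using dropLast_sublist_dropLast_append a c
  · rw [dropLast_append_of_ne_nil hb, dropLast_append_of_ne_nil hb]
    exact (sublist_append_left a c).append_right _

end List

namespace WKS

variable {S AP : Type}

@[simp]
theorem endSt_cons (t s : S) (w : ℚ≥0) (l : List (ℚ≥0 × S)) :
    endSt t ((w, s) :: l) = endSt s l := by
  simp only [endSt, List.map_cons, List.getLastD_cons]

theorem endSt_append (t : S) (a b : List (ℚ≥0 × S)) :
    endSt t (a ++ b) = endSt (endSt t a) b := by
  induction a generalizing t with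
  | nil => rfl
  | cons p a ih =>
    obtain ⟨w, s⟩ := p
    simp only [List.cons_append, endSt_cons, ih]

theorem path_append (K : WKS S AP) (t : S) (a b : List (ℚ≥0 × S)) :
    K.path t (a ++ b) ↔ K.path t a ∧ K.path (endSt t a) b := by
  induction a generalizing t with
  | nil => simp only [List.nil_append, path, true_and]; rfl
  | cons p a ih =>
    obtain ⟨w, s⟩ := p
    simp only [List.cons_append, path, endSt_cons, ih, and_assoc]

theorem acc_append (a b : List (ℚ≥0 × S)) : acc (a ++ b) = acc a + acc b := by
  simp only [acc, List.map_append, List.sum_append]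

theorem inter_append_sublist_inter_append_append (a b c : List (ℚ≥0 × S)) :
    (inter (a ++ b)).Sublist (inter (a ++ c ++ b)) := by
  simpa only [inter, List.map_append] using
    List.dropLast_append_sublist_dropLast_append_append _ _ (c.map Prod.snd)

end WKS

theorem stmt4_general {S AP : Type} (K : WKS S AP) (t : S) (l₁ c l₂ : List (ℚ≥0 × S))
    (hpath : K.path t (l₁ ++ c ++ l₂))
    (hcycle : WKS.endSt t (l₁ ++ c) = WKS.endSt t l₁)
    (hzero : WKS.acc c = 0) :
    K.path t (l₁ ++ l₂) ∧
    WKS.acc (S := S) (l₁ ++ l₂) = WKS.acc (l₁ ++ c ++ l₂) ∧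
    WKS.endSt t (l₁ ++ l₂) = WKS.endSt t (l₁ ++ c ++ l₂) ∧
    ∀ u ∈ WKS.inter (l₁ ++ l₂), u ∈ WKS.inter (l₁ ++ c ++ l₂) := by
  have hend : WKS.endSt t (l₁ ++ l₂) = WKS.endSt t (l₁ ++ c ++ l₂) := by
    rw [WKS.endSt_append t (l₁ ++ c), hcycle, WKS.endSt_append]
  obtain ⟨⟨hl₁, -⟩, hl₂⟩ := by simpa only [K.path_append] using hpath
  refine ⟨?_, ?_, hend, (WKS.inter_append_sublist_inter_append_append l₁ l₂ c).subset⟩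
  · rw [K.path_append]
    exact ⟨hl₁, hcycle ▸ hl₂⟩
  · simp only [WKS.acc_append, hzero, add_zero]

/-- deleting a 0-cycle from a matching transition sequence preserves
the accumulated weight and the end state, and the intermediate states of the new
sequence are among those of the original. -/
theorem stmt4 {S AP : Type} (K : WKS S AP) (t : S) (l₁ c l₂ : List (ℚ≥0 × S))
    (hpath : K.path t (l₁ ++ c ++ l₂)) (hc : c ≠ [])
    (hcycle : WKS.endSt t (l₁ ++ c) = WKS.endSt t l₁)
    (hzero : WKS.acc c = 0) :
    K.path t (l₁ ++ l₂) ∧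
    WKS.acc (S := S) (l₁ ++ l₂) = WKS.acc (l₁ ++ c ++ l₂) ∧
    WKS.endSt t (l₁ ++ l₂) = WKS.endSt t (l₁ ++ c ++ l₂) ∧
    ∀ u ∈ WKS.inter (l₁ ++ l₂), u ∈ WKS.inter (l₁ ++ c ++ l₂) :=
  stmt4_general K t l₁ c l₂ hpath hcycle hzero
end

section
/- The weighted branching simulation distance d, being defined from a relative deviation, need not satisfy the triangle inequality: there exists a finite WKS and states s, t, u with d(s,u) > d(s,t) + d(t,u). -/
open scoped NNReal ENNReal

/-! ### Counterexample: three states with single transitions of weights 1, 2, 4 -/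

def exTrans : Fin 4 → ℚ≥0 → Fin 4 → Prop := fun a w b =>
  (a = 0 ∧ w = 1 ∧ b = 3) ∨ (a = 1 ∧ w = 2 ∧ b = 3) ∨ (a = 2 ∧ w = 4 ∧ b = 3)

def exK : WKS (Fin 4) Unit where
  trans := exTrans
  label := fun a => if a = 3 then Set.univ else ∅

noncomputable def exWt : Fin 4 → ℚ≥0 := fun a =>
  if a = 0 then 1 else if a = 1 then 2 else if a = 2 then 4 else 1

open Classical in
noncomputable def exD : Fin 4 → Fin 4 → ℝ≥0∞ := fun a b =>
  if exK.label a ≠ exK.label b then ⊤ else WKS.rel (exWt a) (exWt b)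

lemma exLabel_ne (a : Fin 4) (h : a ≠ 3) : exK.label 3 ≠ exK.label a := by
  simp only [exK, if_pos rfl, if_neg h]
  intro hc
  exact (Set.univ_eq_empty_iff.mp hc).elim ()

lemma exPath_two (l : List (ℚ≥0 × Fin 4)) (hl : exK.path 2 l) :
    l = [] ∨ l = [(4, 3)] := by
  match l with
  | [] => exact Or.inl rfl
  | (w, s') :: rest =>
    obtain ⟨htr, hrest⟩ := hl
    rcases htr with ⟨h, _⟩ | ⟨h, _⟩ | ⟨_, hw, hb⟩
    · exact absurd h (by decide)
    · exact absurd h (by decide)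
    · subst hw; subst hb
      match rest with
      | [] => exact Or.inr rfl
      | (w', s'') :: _ =>
        rcases hrest.1 with ⟨h, _⟩ | ⟨h, _⟩ | ⟨h, _⟩ <;> exact absurd h (by decide)

set_option maxHeartbeats 2000000 in
lemma exD_prefix : WKS.F exK exD ≤ exD := by
  intro a b
  rw [WKS.F]
  split_ifs with h
  · simp [exD, h]
  · push_neg at h
    apply iSup_le; intro w
    apply iSup_le; intro s'
    apply iSup_le; intro htr
    have hb3 : b ≠ 3 := by
      intro hb; subst hb
      rcases htr with ⟨ha, _, _⟩ | ⟨ha, _, _⟩ | ⟨ha, _, _⟩ <;> subst ha <;>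
        exact exLabel_ne _ (by decide) h.symm
    have hpath : exK.path b [(exWt b, 3)] := by
      fin_cases b
      · exact ⟨Or.inl ⟨rfl, rfl, rfl⟩, trivial⟩
      · exact ⟨Or.inr (Or.inl ⟨rfl, rfl, rfl⟩), trivial⟩
      · exact ⟨Or.inr (Or.inr ⟨rfl, rfl, rfl⟩), trivial⟩
      · exact absurd rfl hb3
    refine le_trans (iInf_le _ ⟨[(exWt b, 3)], hpath⟩) ?_
    show max (WKS.rel w (WKS.acc [(exWt b, 3)]))
        (max (exD s' (WKS.endSt b [(exWt b, 3)]))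
          (⨆ u ∈ WKS.inter [(exWt b, 3)], exD a u)) ≤ exD a b
    have hend : WKS.endSt b [(exWt b, 3)] = 3 := rfl
    have hacc : WKS.acc [(exWt b, (3 : Fin 4))] = exWt b := by simp [WKS.acc]
    have hinter : WKS.inter [(exWt b, 3)] = ([] : List (Fin 4)) := rfl
    rw [hend, hacc, hinter]
    have h33 : exD s' 3 = 0 := by
      rcases htr with ⟨_, _, hs⟩ | ⟨_, _, hs⟩ | ⟨_, _, hs⟩ <;> subst hs <;>
        simp [exD, exWt, WKS.rel]
    have hsup : (⨆ u ∈ ([] : List (Fin 4)), exD a u) = 0 := by simp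
    rw [h33, hsup]
    have hw : w = exWt a := by
      rcases htr with ⟨ha, hw, _⟩ | ⟨ha, hw, _⟩ | ⟨ha, hw, _⟩ <;> subst ha <;> subst hw <;>
        simp [exWt]
    rw [hw]
    have hD : exD a b = WKS.rel (exWt a) (exWt b) := by simp [exD, h]
    rw [hD]
    simp

set_option maxHeartbeats 2000000 in
lemma exD_low (d : Fin 4 → Fin 4 → ℝ≥0∞) (hd : WKS.F exK d ≤ d) : 3 ≤ d 0 2 := by
  have h32 : d 3 2 = ⊤ := by
    refine le_antisymm le_top ?_
    refine le_trans ?_ (hd 3 2)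
    rw [WKS.F, if_pos (exLabel_ne 2 (by decide))]
  refine le_trans ?_ (hd 0 2)
  rw [WKS.F, if_neg ?_]
  swap
  · push_neg; simp [exK]
  refine le_trans ?_ (le_iSup _ (1 : ℚ≥0))
  refine le_trans ?_ (le_iSup _ (3 : Fin 4))
  refine le_trans ?_ (le_iSup _ (Or.inl ⟨rfl, rfl, rfl⟩ : exTrans 0 1 3))
  apply le_iInf
  rintro ⟨l, hl⟩
  rcases exPath_two l hl with rfl | rfl
  · show (3 : ℝ≥0∞) ≤ max (WKS.rel 1 (WKS.acc ([] : List (ℚ≥0 × Fin 4))))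
      (max (d 3 (WKS.endSt 2 ([] : List (ℚ≥0 × Fin 4))))
        (⨆ u ∈ WKS.inter ([] : List (ℚ≥0 × Fin 4)), d 0 u))
    have hend : WKS.endSt (2 : Fin 4) ([] : List (ℚ≥0 × Fin 4)) = 2 := rfl
    rw [hend, h32]
    simp
  · show (3 : ℝ≥0∞) ≤ max (WKS.rel 1 (WKS.acc [((4 : ℚ≥0), (3 : Fin 4))]))
      (max (d 3 (WKS.endSt 2 [((4 : ℚ≥0), (3 : Fin 4))]))
        (⨆ u ∈ WKS.inter [((4 : ℚ≥0), (3 : Fin 4))], d 0 u))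
    refine le_trans ?_ (le_max_left _ _)
    have hacc : WKS.acc [((4 : ℚ≥0), (3 : Fin 4))] = 4 := by simp [WKS.acc]
    rw [hacc, WKS.rel]
    norm_num

set_option maxHeartbeats 1000000 in
/-- the weighted branching simulation distance need not satisfy
the triangle inequality: there is a finite WKS and states `s`, `t`, `u` with
`d(s,u) > d(s,t) + d(t,u)`. -/
theorem stmt8 :
    ∃ (S AP : Type) (_ : Fintype S) (K : WKS S AP)
      (_ : {p : S × ℚ≥0 × S | K.trans p.1 p.2.1 p.2.2}.Finite) (s t u : S),
      WKS.wdist K s t + WKS.wdist K t u < WKS.wdist K s u := by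
  refine ⟨Fin 4, Unit, inferInstance, exK, ?_, 0, 1, 2, ?_⟩
  · refine Set.Finite.subset
      ((((Set.finite_singleton ((2 : Fin 4), ((4 : ℚ≥0), (3 : Fin 4)))).insert
        ((1 : Fin 4), ((2 : ℚ≥0), (3 : Fin 4)))).insert
        ((0 : Fin 4), ((1 : ℚ≥0), (3 : Fin 4))))) ?_
    rintro ⟨p1, p2, p3⟩ h
    rcases h with ⟨h1, h2, h3⟩ | ⟨h1, h2, h3⟩ | ⟨h1, h2, h3⟩ <;> subst h1 <;> subst h2 <;>
      subst h3 <;> simp [Set.mem_insert_iff]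
  · have hst : WKS.wdist exK 0 1 ≤ 1 := by
      have key : (⨅ d ∈ {d : Fin 4 → Fin 4 → ℝ≥0∞ | WKS.F exK d ≤ d}, d 0 1) ≤ exD 0 1 :=
        iInf_le_of_le exD (iInf_le _ exD_prefix)
      have hD : exD 0 1 ≤ 1 := by
        have hE : exD 0 1 = WKS.rel 1 2 := by
          rw [exD, if_neg (by push_neg; simp [exK])]; rfl
        rw [hE, WKS.rel]
        norm_num
      exact le_trans key hD
    have htu : WKS.wdist exK 1 2 ≤ 1 := by
      have key : (⨅ d ∈ {d : Fin 4 → Fin 4 → ℝ≥0∞ | WKS.F exK d ≤ d}, d 1 2) ≤ exD 1 2 :=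
        iInf_le_of_le exD (iInf_le _ exD_prefix)
      have hD : exD 1 2 ≤ 1 := by
        have hE : exD 1 2 = WKS.rel 2 4 := by
          rw [exD, if_neg (by push_neg; simp [exK])]; rfl
        rw [hE, WKS.rel]
        norm_num
      exact le_trans key hD
    have hsu : (3 : ℝ≥0∞) ≤ WKS.wdist exK 0 2 := by
      have key : (3 : ℝ≥0∞) ≤ ⨅ d ∈ {d : Fin 4 → Fin 4 → ℝ≥0∞ | WKS.F exK d ≤ d}, d 0 2 :=
        le_iInf₂ fun d hd => exD_low d hd
      exact key
    calc WKS.wdist exK 0 1 + WKS.wdist exK 1 2 ≤ 1 + 1 := add_le_add hst htu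
      _ < 3 := by norm_num
      _ ≤ WKS.wdist exK 0 2 := hsu
end
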